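/- arXiv:1506.05426 — 9 statements merged into one kernel-verified Lean document; each statement's English description precedes it below -/
import Mathlib

section
/- For every integer n > 1, the Schemmel totient function satisfies L_m(n) = 0 if the smallest prime divisor of n is at most m, and L_m(n) = n * ∏_{p | n} (1 - m/p) otherwise. -/
/-!
Read in `ZMod n`, `Lcount m n` counts the residues `x` for which `x, x + 1, …, x + (m - 1)` are
all units. The Chinese remainder theorem makes this count multiplicative in `n`. Modulo `p ^ e`,
a residue is a unit exactly when its reduction mod `p` is nonzero, so the count is `p ^ (e - 1)`
times the number of `y : ZMod p` avoiding the `m` residues `0, -1, …, -(m - 1)`, that is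
`p ^ (e - 1) * (p - m)` when `m ≤ p`. If instead some prime `p ∣ n` has `p ≤ m`, then one of
`x, …, x + (m - 1)` is divisible by `p`, and the count vanishes.
-/

/-- The Schemmel totient function, defined by counting:
`L m n` is the number of `k` with `1 ≤ k ≤ n` such that `gcd(k+s, n) = 1`
for all `s ∈ {0, …, m-1}`. -/
def Lcount (m n : ℕ) : ℕ :=
  ((Finset.Icc 1 n).filter (fun k => ∀ s < m, Nat.gcd (k + s) n = 1)).card

open Finset

theorem AddMonoidHom.card_preimage_of_surjective {G H : Type*} [AddGroup G] [Finite G]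
    [AddGroup H] {f : G →+ H} (hf : Function.Surjective f) (T : Set H) :
    Nat.card (f ⁻¹' T) = Nat.card T * Nat.card f.ker := by
  have : Finite H := Finite.of_surjective f hf
  let T' := T.toFinite.toFinset
  have hT : f ⁻¹' T = f ⁻¹' T' := by simp [T']
  rw [hT, card_preimage_eq_sum_card_image_eq fun _ _ => Set.toFinite _,
    sum_congr rfl fun y _ =>
      (Nat.card_congr (f.fiberEquivKerOfSurjective hf y) : Nat.card {x // f x = y} = _),
    sum_const, smul_eq_mul, Nat.card_coe_set_eq T, Set.ncard_eq_toFinset_card T]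

theorem ZMod.isUnit_iff_castHom_ne_zero {p e : ℕ} (hp : p.Prime) (he : e ≠ 0)
    (x : ZMod (p ^ e)) : IsUnit x ↔ castHom (dvd_pow_self p he) (ZMod p) x ≠ 0 := by
  have : NeZero (p ^ e) := ⟨pow_ne_zero e hp.ne_zero⟩
  obtain ⟨k, rfl⟩ := ZMod.natCast_zmod_surjective x
  rw [map_natCast, ZMod.isUnit_iff_coprime, Ne, ZMod.natCast_eq_zero_iff,
    Nat.coprime_pow_right_iff (Nat.pos_of_ne_zero he), Nat.coprime_comm,
    hp.coprime_iff_not_dvd]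

theorem ZMod.card_forall_add_natCast_ne_zero {n m : ℕ} [NeZero n] (hm : m ≤ n) :
    Nat.card {y : ZMod n | ∀ s < m, y + s ≠ 0} = n - m := by
  classical
  have hset : {y : ZMod n | ∀ s < m, y + s ≠ 0}.toFinset
      = ((range m).image fun s : ℕ => -(s : ZMod n))ᶜ := by
    ext y
    simp [add_eq_zero_iff_eq_neg, eq_comm]
  have hinj : Set.InjOn (fun s : ℕ => -(s : ZMod n)) (range m) := by
    intro s hs t ht hst
    simp only [coe_range, Set.mem_Iio, neg_inj] at hs ht hst
    simpa [Nat.mod_eq_of_lt (hs.trans_le hm), Nat.mod_eq_of_lt (ht.trans_le hm)] using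
      (ZMod.natCast_eq_natCast_iff' s t n).mp hst
  rw [Nat.card_eq_card_toFinset, hset, card_compl, card_image_of_injOn hinj, card_range,
    ZMod.card]

def schemmelSet (m n : ℕ) : Set (ZMod n) := {x | ∀ s < m, IsUnit (x + s)}

theorem mem_schemmelSet {m n : ℕ} {x : ZMod n} :
    x ∈ schemmelSet m n ↔ ∀ s < m, IsUnit (x + s) :=
  Iff.rfl

theorem Lcount_eq_card_schemmelSet (m n : ℕ) [NeZero n] :
    Lcount m n = Nat.card (schemmelSet m n) := by
  classical
  rw [Nat.card_eq_card_toFinset]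
  -- the inverse sends `x` to its representative in `[1, n]`, so `0 ↦ n`
  refine card_nbij' (fun k => (k : ZMod n)) (fun x => (x - 1).val + 1) ?_ ?_ ?_ ?_
  · intro k hk
    simp only [coe_filter, mem_Icc, Set.mem_ofPred_eq, mem_coe, Set.mem_toFinset,
      mem_schemmelSet] at hk ⊢
    intro s hs
    rw [← Nat.cast_add, ZMod.isUnit_iff_coprime]
    exact hk.2 s hs
  · intro x hx
    simp only [coe_filter, mem_Icc, Set.mem_ofPred_eq, mem_coe, Set.mem_toFinset,
      mem_schemmelSet] at hx ⊢
    refine ⟨⟨by omega, Nat.succ_le_of_lt (ZMod.val_lt _)⟩, fun s hs => ?_⟩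
    rw [← Nat.Coprime, ← ZMod.isUnit_iff_coprime]
    simpa using hx s hs
  · intro k hk
    simp only [coe_filter, mem_Icc, Set.mem_ofPred_eq] at hk
    show ((k : ZMod n) - 1).val + 1 = k
    rw [← Nat.cast_pred hk.1.1, ZMod.val_natCast, Nat.mod_eq_of_lt (by omega)]
    omega
  · intro x _
    simp

theorem card_schemmelSet_one (m : ℕ) : Nat.card (schemmelSet m 1) = 1 := by
  rw [show schemmelSet m 1 = Set.univ from
    Set.eq_univ_of_forall fun _ _ _ => isUnit_of_subsingleton _, Nat.card_univ]
  exact Nat.card_unique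

theorem card_schemmelSet_mul (m : ℕ) {a b : ℕ} (h : a.Coprime b) :
    Nat.card (schemmelSet m (a * b)) =
      Nat.card (schemmelSet m a) * Nat.card (schemmelSet m b) := by
  let e := ZMod.chineseRemainder h
  have he : ∀ x, x ∈ schemmelSet m (a * b) ↔ e x ∈ schemmelSet m a ×ˢ schemmelSet m b := by
    intro x
    simp only [mem_schemmelSet, Set.mem_prod, ← forall_and]
    refine forall₂_congr fun s _ => ?_
    rw [← MulEquiv.isUnit_map e, map_add, map_natCast, Prod.isUnit_iff]
    rfl
  rw [← Nat.card_prod, ← Nat.card_congr (Equiv.Set.prod _ _)]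
  exact Nat.card_congr (e.toEquiv.subtypeEquiv he)

theorem card_schemmelSet_prime_pow {m p e : ℕ} (hp : p.Prime) (he : e ≠ 0) (hm : m ≤ p) :
    Nat.card (schemmelSet m (p ^ e)) = p ^ (e - 1) * (p - m) := by
  have : Fact p.Prime := ⟨hp⟩
  let f := (ZMod.castHom (dvd_pow_self p he) (ZMod p)).toAddMonoidHom
  have hf : Function.Surjective f := ZMod.castHom_surjective (dvd_pow_self p he)
  have hpre : schemmelSet m (p ^ e) = f ⁻¹' {y | ∀ s < m, y + s ≠ 0} := by
    ext x
    simp only [mem_schemmelSet, Set.mem_preimage, Set.mem_ofPred_eq,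
      ZMod.isUnit_iff_castHom_ne_zero hp he, map_add, map_natCast]
    rfl
  have hker : Nat.card f.ker = p ^ (e - 1) := by
    have hG := f.card_preimage_of_surjective hf Set.univ
    rw [Set.preimage_univ, Nat.card_univ, Nat.card_univ, Nat.card_zmod, Nat.card_zmod] at hG
    refine (Nat.eq_of_mul_eq_mul_left hp.pos ?_).symm
    rw [← hG, ← pow_succ', Nat.sub_add_cancel (Nat.one_le_iff_ne_zero.mpr he)]
  rw [hpre, f.card_preimage_of_surjective hf, hker, ZMod.card_forall_add_natCast_ne_zero hm,
    mul_comm]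

theorem schemmelSet_eq_empty {m n p : ℕ} (hp : p.Prime) (hpn : p ∣ n) (hpm : p ≤ m) :
    schemmelSet m n = ∅ := by
  have : Fact p.Prime := ⟨hp⟩
  refine Set.eq_empty_of_forall_notMem fun x hx => ?_
  let f := ZMod.castHom hpn (ZMod p)
  have hs : (-f x).val < m := (ZMod.val_lt _).trans_le hpm
  refine ((hx _ hs).map f).ne_zero ?_
  simp

theorem cast_card_schemmelSet_eq_mul_prod {m n : ℕ} (hn : n ≠ 0)
    (hm : ∀ p ∈ n.primeFactors, m ≤ p) :
    (Nat.card (schemmelSet m n) : ℚ) = n * ∏ p ∈ n.primeFactors, (1 - (m : ℚ) / p) := by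
  have hmul := Nat.multiplicative_factorization (fun k => (Nat.card (schemmelSet m k) : ℚ))
    (fun a b hab => by simp only [card_schemmelSet_mul m hab, Nat.cast_mul])
    (by simp only [card_schemmelSet_one, Nat.cast_one]) hn
  rw [hmul, Nat.prod_factorization_eq_prod_primeFactors]
  have hprod : (n : ℚ) = ∏ p ∈ n.primeFactors, (p : ℚ) ^ n.factorization p := by
    conv_lhs => rw [← Nat.prod_factorization_pow_eq_self hn]
    rw [Nat.prod_factorization_eq_prod_primeFactors]
    push_cast
    rfl
  rw [hprod, ← prod_mul_distrib]
  refine prod_congr rfl fun p hp => ?_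
  have hpp := Nat.prime_of_mem_primeFactors hp
  obtain ⟨k, hk⟩ : ∃ k, n.factorization p = k + 1 :=
    ⟨_, (Nat.succ_pred_eq_of_pos
      (hpp.factorization_pos_of_dvd hn (Nat.dvd_of_mem_primeFactors hp))).symm⟩
  rw [card_schemmelSet_prime_pow hpp (by omega) (hm p hp), hk]
  have : (p : ℚ) ≠ 0 := by exact_mod_cast hpp.ne_zero
  push_cast [Nat.cast_sub (hm p hp)]
  field_simp
  ring

theorem schemmel_formula_general (m n : ℕ) (hn : 1 < n) :
    (n.minFac ≤ m → Lcount m n = 0) ∧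
    (m < n.minFac →
      (Lcount m n : ℚ) = n * ∏ p ∈ n.primeFactors, (1 - (m : ℚ) / p)) := by
  have : NeZero n := ⟨by omega⟩
  rw [Lcount_eq_card_schemmelSet]
  refine ⟨fun h => ?_, fun h => ?_⟩
  · rw [schemmelSet_eq_empty (Nat.minFac_prime hn.ne') n.minFac_dvd h]
    simp
  · refine cast_card_schemmelSet_eq_mul_prod (by omega) fun p hp => (h.trans_le ?_).le
    exact Nat.minFac_le_of_dvd (Nat.prime_of_mem_primeFactors hp).two_le
      (Nat.dvd_of_mem_primeFactors hp)

theorem schemmel_formula (m n : ℕ) (hm : 1 ≤ m) (hn : 1 < n) :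
    (n.minFac ≤ m → Lcount m n = 0) ∧
    (m < n.minFac →
      (Lcount m n : ℚ) = n * ∏ p ∈ n.primeFactors, (1 - (m : ℚ) / p)) :=
  schemmel_formula_general m n hn
end

section
/- For every positive integer m, the Schemmel totient function L_m is multiplicative: if gcd(x, y) = 1, then L_m(xy) = L_m(x) · L_m(y). -/
open scoped Classical in
lemma Lcount_eq_card (m n : ℕ) [NeZero n] (hn : n ≠ 0) :
    Lcount m n = (Finset.univ.filter
      (fun u : ZMod n => ∀ s < m, IsUnit (u + (s : ZMod n)))).card := by
  unfold Lcount
  refine Finset.card_bij' (fun k _ => (k : ZMod n))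
    (fun u _ => if (u : ZMod n).val = 0 then n else u.val) ?_ ?_ ?_ ?_
  · intro k hk
    simp only [Finset.mem_filter, Finset.mem_Icc, Finset.mem_univ, true_and] at hk ⊢
    intro s hs
    have h := hk.2 s hs
    rw [← Nat.cast_add, ZMod.isUnit_iff_coprime]
    exact h
  · intro u hu
    simp only [Finset.mem_filter, Finset.mem_univ, true_and] at hu
    have hcast : ((if u.val = 0 then n else u.val : ℕ) : ZMod n) = u := by
      split
      · rename_i h0
        simp [ZMod.natCast_self, (ZMod.val_eq_zero u).mp h0]
      · exact ZMod.natCast_rightInverse u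
    simp only [Finset.mem_filter, Finset.mem_Icc]
    constructor
    · split
      · exact ⟨Nat.one_le_iff_ne_zero.mpr hn, le_refl n⟩
      · rename_i h0
        exact ⟨Nat.one_le_iff_ne_zero.mpr h0, le_of_lt (ZMod.val_lt u)⟩
    · intro s hs
      have := hu s hs
      rw [← hcast, ← Nat.cast_add, ZMod.isUnit_iff_coprime] at this
      exact this
  · intro k hk
    simp only [Finset.mem_filter, Finset.mem_Icc] at hk
    obtain ⟨⟨h1, h2⟩, _⟩ := hk
    rcases lt_or_eq_of_le h2 with h | h
    · simp only [ZMod.val_natCast_of_lt h]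
      rw [if_neg (Nat.one_le_iff_ne_zero.mp h1)]
    · subst h
      simp [ZMod.natCast_self]
  · intro u hu
    split
    · rename_i h0
      simp [ZMod.natCast_self, ((ZMod.val_eq_zero u).mp h0).symm]
    · exact ZMod.natCast_rightInverse u

lemma prod_isUnit_iff {M N : Type*} [Monoid M] [Monoid N] {p : M × N} :
    IsUnit p ↔ IsUnit p.1 ∧ IsUnit p.2 := by
  constructor
  · intro h
    exact ⟨h.map (MonoidHom.fst M N), h.map (MonoidHom.snd M N)⟩
  · rintro ⟨⟨u, hu⟩, ⟨v, hv⟩⟩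
    refine ⟨⟨(↑u, ↑v), (↑u⁻¹, ↑v⁻¹), ?_, ?_⟩, ?_⟩
    · simp [Prod.ext_iff]
    · simp [Prod.ext_iff]
    · simp [Prod.ext_iff, hu, hv]

open scoped Classical in
lemma card_zmod_prod (m x y : ℕ) [NeZero x] [NeZero y] (h : Nat.Coprime x y) :
    (Finset.univ.filter
      (fun u : ZMod (x*y) => ∀ s < m, IsUnit (u + (s : ZMod (x*y))))).card
    = (Finset.univ.filter (fun u : ZMod x => ∀ s < m, IsUnit (u + (s : ZMod x)))).card *
      (Finset.univ.filter (fun u : ZMod y => ∀ s < m, IsUnit (u + (s : ZMod y)))).card := by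
  haveI : NeZero (x*y) := ⟨mul_ne_zero (NeZero.ne x) (NeZero.ne y)⟩
  let e := ZMod.chineseRemainder h
  rw [← Fintype.card_subtype, ← Fintype.card_subtype, ← Fintype.card_subtype,
    ← Fintype.card_prod]
  refine Fintype.card_congr ?_
  refine (e.toEquiv.subtypeEquiv ?_).trans (Equiv.subtypeProdEquivProd)
  intro u
  have key : ∀ s : ℕ, IsUnit (u + (s : ZMod (x*y))) ↔
      IsUnit ((e u).1 + (s : ZMod x)) ∧ IsUnit ((e u).2 + (s : ZMod y)) := by
    intro s
    have hmap : e (u + (s : ZMod (x*y))) = ((e u).1 + (s : ZMod x), (e u).2 + (s : ZMod y)) := by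
      rw [map_add, map_natCast]
      rfl
    constructor
    · intro hu
      have := hu.map e
      rw [hmap] at this
      exact prod_isUnit_iff.mp this
    · intro ⟨h1, h2⟩
      have : IsUnit (e (u + (s : ZMod (x*y)))) := by
        rw [hmap]; exact prod_isUnit_iff.mpr ⟨h1, h2⟩
      simpa using this.map e.symm
  constructor
  · intro hu
    exact ⟨fun s hs => (key s |>.mp (hu s hs)).1, fun s hs => (key s |>.mp (hu s hs)).2⟩
  · intro ⟨h1, h2⟩ s hs
    exact (key s).mpr ⟨h1 s hs, h2 s hs⟩

theorem schemmel_multiplicative (m : ℕ) (hm : 1 ≤ m) (x y : ℕ)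
    (hxy : Nat.gcd x y = 1) : Lcount m (x * y) = Lcount m x * Lcount m y := by
  rcases eq_or_ne x 0 with rfl | hx
  · have : y = 1 := by simpa using hxy
    subst this
    simp [Lcount]
  rcases eq_or_ne y 0 with rfl | hy
  · have : x = 1 := by simpa using hxy
    subst this
    simp [Lcount]
  haveI : NeZero x := ⟨hx⟩
  haveI : NeZero y := ⟨hy⟩
  haveI : NeZero (x*y) := ⟨mul_ne_zero hx hy⟩
  rw [Lcount_eq_card m (x*y) (mul_ne_zero hx hy), Lcount_eq_card m x hx,
    Lcount_eq_card m y hy]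
  exact card_zmod_prod m x y hxy
end

section
/- For positive integers x, y, m, if x divides y then L_m(x) divides L_m(y). -/
open Finset

/-- The Schemmel totient function: `L m 0 = 0`, `L m 1 = 1`, and for `n > 1`,
`L m n = ∏ p^(α-1) (p - m)` over the canonical factorization of `n` if every
prime divisor of `n` exceeds `m`, and `0` otherwise. -/
def L (m n : ℕ) : ℕ :=
  if n ≤ 1 then n
  else if ∀ p ∈ n.primeFactors, m < p then
    ∏ p ∈ n.primeFactors, p ^ (n.factorization p - 1) * (p - m)
  else 0

-- At `n = 1` the product is empty and the condition vacuous.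
theorem L_of_ne_zero {m n : ℕ} (hn : n ≠ 0) :
    L m n = if ∀ p ∈ n.primeFactors, m < p then
      ∏ p ∈ n.primeFactors, p ^ (n.factorization p - 1) * (p - m) else 0 := by
  rcases eq_or_ne n 1 with rfl | hn1
  · simp [L]
  · rw [L, if_neg (by omega)]

theorem prod_primeFactors_pow_pred_mul_dvd {x y : ℕ} (m : ℕ) (hy : y ≠ 0) (h : x ∣ y) :
    ∏ p ∈ x.primeFactors, p ^ (x.factorization p - 1) * (p - m) ∣
      ∏ p ∈ y.primeFactors, p ^ (y.factorization p - 1) * (p - m) := by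
  have hx : x ≠ 0 := ne_zero_of_dvd_ne_zero hy h
  have hle : x.factorization ≤ y.factorization := (Nat.factorization_le_iff_dvd hx hy).mpr h
  calc ∏ p ∈ x.primeFactors, p ^ (x.factorization p - 1) * (p - m)
      ∣ ∏ p ∈ x.primeFactors, p ^ (y.factorization p - 1) * (p - m) :=
        prod_dvd_prod_of_dvd _ _ fun p _ =>
          mul_dvd_mul_right (pow_dvd_pow p (Nat.sub_le_sub_right (hle p) 1)) _
    _ ∣ ∏ p ∈ y.primeFactors, p ^ (y.factorization p - 1) * (p - m) :=
        prod_dvd_prod_of_subset _ _ _ (Nat.primeFactors_mono h hy)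

theorem schemmel_dvd_general (x y m : ℕ)
    (h : x ∣ y) : L m x ∣ L m y := by
  rcases eq_or_ne y 0 with rfl | hy
  · exact dvd_zero _
  have hx : x ≠ 0 := ne_zero_of_dvd_ne_zero hy h
  rw [L_of_ne_zero hx, L_of_ne_zero hy]
  split_ifs with hmx hmy hmy
  · exact prod_primeFactors_pow_pred_mul_dvd m hy h
  · exact dvd_zero _
  · exact absurd (fun p hp => hmy p (Nat.primeFactors_mono h hy hp)) hmx
  · exact dvd_zero _

theorem schemmel_dvd (x y m : ℕ) (hx : 0 < x) (hy : 0 < y) (hm : 0 < m)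
    (h : x ∣ y) : L m x ∣ L m y :=
  schemmel_dvd_general x y m h
end

section
/- For positive integers x, y, m, r, if x divides y then the r-th iterate L_m^{(r)}(x) divides L_m^{(r)}(y). -/
open Finset

lemma L_dvd (m : ℕ) : ∀ {a b : ℕ}, a ∣ b → L m a ∣ L m b := by
  intro a b h
  rcases eq_or_ne b 0 with rfl | hb0
  · simp [L]
  rcases eq_or_ne a 0 with rfl | ha0
  · exact absurd (Nat.eq_zero_of_zero_dvd h) hb0
  unfold L
  rcases le_or_gt b 1 with hb1 | hb1
  · have : b = 1 := le_antisymm hb1 (Nat.one_le_iff_ne_zero.mpr hb0)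
    subst this
    rcases Nat.dvd_one.mp h with rfl
    simp
  rcases le_or_gt a 1 with ha1 | ha1
  · have : a = 1 := le_antisymm ha1 (Nat.one_le_iff_ne_zero.mpr ha0)
    subst this
    simp
  rw [if_neg (not_le.mpr ha1), if_neg (not_le.mpr hb1)]
  by_cases hyp : ∀ p ∈ b.primeFactors, m < p
  · have hsub : a.primeFactors ⊆ b.primeFactors := Nat.primeFactors_mono h hb0
    have hxp : ∀ p ∈ a.primeFactors, m < p := fun p hp => hyp p (hsub hp)
    rw [if_pos hxp, if_pos hyp]
    have hfac : ∀ p, a.factorization p ≤ b.factorization p := fun p =>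
      (Nat.factorization_le_iff_dvd ha0 hb0).mpr h p
    calc ∏ p ∈ a.primeFactors, p ^ (a.factorization p - 1) * (p - m)
        ∣ ∏ p ∈ a.primeFactors, p ^ (b.factorization p - 1) * (p - m) := by
          apply Finset.prod_dvd_prod_of_dvd
          intro p _
          exact mul_dvd_mul (pow_dvd_pow p (Nat.sub_le_sub_right (hfac p) 1)) dvd_rfl
      _ ∣ ∏ p ∈ b.primeFactors, p ^ (b.factorization p - 1) * (p - m) :=
          Finset.prod_dvd_prod_of_subset _ _ _ hsub
  · rw [if_neg hyp]
    exact dvd_zero _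

theorem schemmel_iterate_dvd (x y m r : ℕ) (hx : 0 < x) (hy : 0 < y)
    (hm : 0 < m) (hr : 0 < r) (h : x ∣ y) : (L m)^[r] x ∣ (L m)^[r] y := by
  induction r with
  | zero => simpa using h
  | succ n ih =>
    rw [Function.iterate_succ_apply', Function.iterate_succ_apply']
    exact L_dvd m (by rcases Nat.eq_zero_or_pos n with rfl | hn
                      · simpa using h
                      · exact ih hn)
end

section
/- For every positive integer m and every positive integer n, H_m(n) = 1 if and only if no prime q with H_m(q) = 0 divides n. -/
open Finset

/-- `R m n` is the least positive `k` with `L_m^{(k)}(n) ∈ {0, 1}`. -/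
noncomputable def R (m n : ℕ) : ℕ :=
  sInf {k | 0 < k ∧ ((L m)^[k] n = 0 ∨ (L m)^[k] n = 1)}

/-- `H m n = L_m^{(R_m(n))}(n)`. -/
noncomputable def H (m n : ℕ) : ℕ := (L m)^[R m n] n

/-- `D m 1 = 0` and `D m n = ∑_{i=1}^{R_m(n)} L_m^{(i)}(n)` for `n > 1`. -/
noncomputable def D (m n : ℕ) : ℕ :=
  if n = 1 then 0 else ∑ i ∈ Finset.Icc 1 (R m n), (L m)^[i] n

/-!
Since `0` and `1` are fixed points of `L m`, `H m` is invariant under `L m`. For a prime `p ≤ m`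
we get `H m p = 0`, and for a prime `p > m` we get `H m p = H m (p - m)`. When every prime factor
of `n` exceeds `m`, each `p - m` divides `L m n`, and conversely each prime factor of `L m n` is a
prime factor of `n` or of some `p - m`. Strong induction on `n` then shows that `H m n = 1`
exactly when `H m p = 1` for every prime factor `p` of `n`.
-/

section L

variable {m n : ℕ}

lemma L_zero (m : ℕ) : L m 0 = 0 := by simp [L]

lemma L_one (m : ℕ) : L m 1 = 1 := by simp [L]

lemma L_eq_prod (hn : 2 ≤ n) (h : ∀ p ∈ n.primeFactors, m < p) :
    L m n = ∏ p ∈ n.primeFactors, p ^ (n.factorization p - 1) * (p - m) := by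
  rw [L, if_neg (by omega), if_pos h]

lemma L_eq_zero_of_mem_primeFactors {p : ℕ} (hp : p ∈ n.primeFactors) (hpm : p ≤ m) :
    L m n = 0 := by
  have hn : ¬ n ≤ 1 := fun h => by interval_cases n <;> simp at hp
  rw [L, if_neg hn, if_neg fun h => absurd (h p hp) (not_lt.2 hpm)]

lemma L_prime_of_lt {p : ℕ} (hp : p.Prime) (hpm : m < p) : L m p = p - m := by
  rw [L_eq_prod hp.two_le (by simpa [hp.primeFactors] using hpm), hp.primeFactors,
    prod_singleton, hp.factorization]
  simp

lemma L_lt (hm : 0 < m) (hn : 2 ≤ n) : L m n < n := by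
  by_cases h : ∀ p ∈ n.primeFactors, m < p
  · rw [L_eq_prod hn h]
    calc ∏ p ∈ n.primeFactors, p ^ (n.factorization p - 1) * (p - m)
        < ∏ p ∈ n.primeFactors, p ^ (n.factorization p - 1) * p := by
          refine prod_lt_prod_of_nonempty (fun p hp => ?_) (fun p hp => ?_)
            (Nat.nonempty_primeFactors.2 hn)
          all_goals have := h p hp; have := (Nat.prime_of_mem_primeFactors hp).pos
          · exact Nat.mul_pos (by positivity) (by omega)
          · exact Nat.mul_lt_mul_of_pos_left (by omega) (by positivity)
      _ = ∏ p ∈ n.primeFactors, p ^ n.factorization p := by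
          refine prod_congr rfl fun p hp => ?_
          have : n.factorization p ≠ 0 := Finsupp.mem_support_iff.1 hp
          rw [← pow_succ, Nat.sub_add_cancel (by omega)]
      _ = n := (Nat.prod_primeFactors_pow_factorization (by omega)).symm
  · obtain ⟨p, hp, hpm⟩ := not_forall₂.1 h
    rw [L_eq_zero_of_mem_primeFactors hp (not_lt.1 hpm)]
    omega

lemma L_ne_zero (hn : n ≠ 0) (h : ∀ p ∈ n.primeFactors, m < p) : L m n ≠ 0 := by
  rcases (show n = 1 ∨ 2 ≤ n by omega) with rfl | hn
  · simp [L_one]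
  rw [L_eq_prod hn h, prod_ne_zero_iff]
  intro p hp
  have := h p hp
  exact mul_ne_zero (pow_ne_zero _ (Nat.prime_of_mem_primeFactors hp).ne_zero) (by omega)

lemma sub_dvd_L (h : ∀ p ∈ n.primeFactors, m < p) {p : ℕ} (hp : p ∈ n.primeFactors) :
    p - m ∣ L m n := by
  obtain ⟨hpp, hpn, hn0⟩ := Nat.mem_primeFactors.1 hp
  have hn : 2 ≤ n := hpp.two_le.trans (Nat.le_of_dvd (by omega) hpn)
  rw [L_eq_prod hn h]
  exact (dvd_mul_left _ _).trans (dvd_prod_of_mem _ hp)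

lemma primeFactors_L_subset (m n : ℕ) :
    (L m n).primeFactors ⊆
      n.primeFactors ∪ n.primeFactors.biUnion fun p => (p - m).primeFactors := by
  intro r hr
  obtain ⟨hr, hrL, hL⟩ := Nat.mem_primeFactors.1 hr
  unfold L at hrL hL
  split_ifs at hrL hL with _ h
  · exact mem_union_left _ (Nat.mem_primeFactors.2 ⟨hr, hrL, hL⟩)
  · obtain ⟨p, hp, hrp⟩ := hr.prime.exists_mem_finset_dvd hrL
    rcases hr.prime.dvd_mul.1 hrp with hrp | hrp
    · rw [(Nat.prime_dvd_prime_iff_eq hr (Nat.prime_of_mem_primeFactors hp)).1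
        (hr.dvd_of_dvd_pow hrp)]
      exact mem_union_left _ hp
    · have hpm := h p hp
      exact mem_union_right _
        (mem_biUnion.2 ⟨p, hp, Nat.mem_primeFactors.2 ⟨hr, hrp, by omega⟩⟩)
  · exact absurd rfl hL

end L

section H

variable {m n : ℕ}

lemma exists_iterate_L_le_one (hm : 0 < m) (n : ℕ) : ∃ k, 0 < k ∧ (L m)^[k] n ≤ 1 := by
  induction n using Nat.strong_induction_on with
  | _ n ih =>
    rcases le_or_gt n 1 with hn | hn
    · refine ⟨1, one_pos, ?_⟩
      interval_cases n
      · simp [L_zero]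
      · simp [L_one]
    · obtain ⟨k, -, hk⟩ := ih (L m n) (L_lt hm hn)
      exact ⟨k + 1, k.succ_pos, by rwa [Function.iterate_succ_apply]⟩

lemma H_eq_iterate {k : ℕ} (hk : 0 < k) (h : (L m)^[k] n ≤ 1) : H m n = (L m)^[k] n := by
  have hmem : k ∈ {k | 0 < k ∧ ((L m)^[k] n = 0 ∨ (L m)^[k] n = 1)} := ⟨hk, by omega⟩
  obtain ⟨-, hR⟩ : 0 < R m n ∧ ((L m)^[R m n] n = 0 ∨ (L m)^[R m n] n = 1) :=
    Nat.sInf_mem ⟨k, hmem⟩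
  have hRk : R m n ≤ k := Nat.sInf_le hmem
  have hfix : L m ((L m)^[R m n] n) = (L m)^[R m n] n := by
    rcases hR with hR | hR <;> rw [hR] <;> simp [L_zero, L_one]
  rw [H, ← Nat.sub_add_cancel hRk, Function.iterate_add_apply, Function.iterate_fixed hfix]

lemma H_le_one (hm : 0 < m) (n : ℕ) : H m n ≤ 1 := by
  obtain ⟨k, hk, h⟩ := exists_iterate_L_le_one hm n
  rwa [H_eq_iterate hk h]

lemma H_zero (m : ℕ) : H m 0 = 0 := by
  simpa [L_zero] using H_eq_iterate (m := m) (n := 0) one_pos (by simp [L_zero])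

lemma H_one (m : ℕ) : H m 1 = 1 := by
  simpa [L_one] using H_eq_iterate (m := m) (n := 1) one_pos (by simp [L_one])

lemma H_L (hm : 0 < m) (n : ℕ) : H m (L m n) = H m n := by
  obtain ⟨k, hk, h⟩ := exists_iterate_L_le_one hm (L m n)
  rw [H_eq_iterate hk h, H_eq_iterate (k.succ_pos) (by rwa [Function.iterate_succ_apply]),
    Function.iterate_succ_apply]

lemma H_prime_of_le {p : ℕ} (hp : p.Prime) (hpm : p ≤ m) : H m p = 0 := by
  have hL : L m p = 0 := L_eq_zero_of_mem_primeFactors (by simp [hp.primeFactors]) hpm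
  rw [H_eq_iterate (k := 1) one_pos (by simp [hL]), Function.iterate_one, hL]

lemma H_prime_of_lt (hm : 0 < m) {p : ℕ} (hp : p.Prime) (hpm : m < p) : H m p = H m (p - m) := by
  rw [← H_L hm p, L_prime_of_lt hp hpm]

end H

theorem H_eq_one_iff_forall_primeFactors {m : ℕ} (hm : 0 < m) {n : ℕ} (hn : n ≠ 0) :
    H m n = 1 ↔ ∀ p ∈ n.primeFactors, H m p = 1 := by
  induction n using Nat.strong_induction_on with
  | _ n ih =>
  rcases (show n = 1 ∨ 2 ≤ n by omega) with rfl | hn2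
  · simp [H_one]
  by_cases h : ∀ p ∈ n.primeFactors, m < p
  · have hL0 : L m n ≠ 0 := L_ne_zero hn h
    have hsub (p : ℕ) (hp : p ∈ n.primeFactors) :
        H m p = 1 ↔ ∀ r ∈ (p - m).primeFactors, H m r = 1 := by
      obtain ⟨hpp, hpn, -⟩ := Nat.mem_primeFactors.1 hp
      have hpm := h p hp
      have hpn := Nat.le_of_dvd (by omega) hpn
      rw [H_prime_of_lt hm hpp hpm]
      exact ih (p - m) (by omega) (by omega)
    rw [← H_L hm, ih (L m n) (L_lt hm hn2) hL0]
    constructor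
    · intro hL p hp
      exact (hsub p hp).2 fun r hr => hL r (Nat.primeFactors_mono (sub_dvd_L h hp) hL0 hr)
    · intro hn r hr
      rcases mem_union.1 (primeFactors_L_subset m n hr) with hr | hr
      · exact hn r hr
      · obtain ⟨p, hp, hr⟩ := mem_biUnion.1 hr
        exact (hsub p hp).1 (hn p hp) r hr
  · obtain ⟨p, hp, hpm⟩ := not_forall₂.1 h
    have hHp : H m p = 0 := H_prime_of_le (Nat.prime_of_mem_primeFactors hp) (not_lt.1 hpm)
    rw [← H_L hm, L_eq_zero_of_mem_primeFactors hp (not_lt.1 hpm), H_zero]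
    exact iff_of_false zero_ne_one fun h => absurd (h p hp) (by omega)

theorem H_eq_one_iff (m n : ℕ) (hm : 0 < m) (hn : 0 < n) :
    H m n = 1 ↔ ∀ q : ℕ, q.Prime → H m q = 0 → ¬ q ∣ n := by
  rw [H_eq_one_iff_forall_primeFactors hm hn.ne']
  refine ⟨fun h q hq hq0 hqn => ?_, fun h p hp => ?_⟩
  · have := h q (Nat.mem_primeFactors.2 ⟨hq, hqn, hn.ne'⟩)
    omega
  · obtain ⟨hp, hpn, -⟩ := Nat.mem_primeFactors.1 hp
    rcases Nat.le_one_iff_eq_zero_or_eq_one.1 (H_le_one hm p) with h0 | h1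
    · exact absurd hpn (h p hp h0)
    · exact h1
end

section
/- If m > 1 is an odd integer, then every positive integer n is D_m-deficient, i.e., D_m(n) < n. -/
/-! For odd `m > 1` and `n > 1`, a nonzero `L_m(n)` is even, since every factor `p - m` is a
difference of two odd numbers. An even number greater than `1` has the prime factor `2 ≤ m`,
so `L_m` kills it. Hence the orbit of `n` reaches `{0, 1}` after at most two steps, with the
second term `0`, so `D_m(n) = L_m(n)`, which is smaller than `n` as `p - m < p`. -/

open Finset

lemma L_lt_self {m n : ℕ} (hm : 0 < m) (hn : 1 < n) : L m n < n := by
  unfold L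
  rw [if_neg (by omega)]
  split_ifs with hlarge
  · have hn0 : n ≠ 0 := by omega
    conv_rhs => rw [Nat.prod_primeFactors_pow_factorization hn0]
    refine prod_lt_prod_of_nonempty (fun p hp => ?_) (fun p hp => ?_)
      (Nat.nonempty_primeFactors.mpr hn)
    · have := (Nat.prime_of_mem_primeFactors hp).pos
      have := hlarge p hp
      exact Nat.mul_pos (by positivity) (by omega)
    · have hp0 := (Nat.prime_of_mem_primeFactors hp).pos
      have hα : n.factorization p ≠ 0 :=
        Finsupp.mem_support_iff.mp (by rwa [Nat.support_factorization])
      calc p ^ (n.factorization p - 1) * (p - m)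
          < p ^ (n.factorization p - 1) * p := Nat.mul_lt_mul_of_pos_left (by omega) (by positivity)
        _ = p ^ n.factorization p := pow_sub_one_mul hα p
  · omega

lemma even_L {m n : ℕ} (hm : 1 < m) (hmo : Odd m) (hn : 1 < n) : Even (L m n) := by
  unfold L
  rw [if_neg (by omega)]
  split_ifs with hlarge
  · obtain ⟨p, hp⟩ := Nat.nonempty_primeFactors.mpr hn
    have hmp := hlarge p hp
    have hpo : Odd p := (Nat.prime_of_mem_primeFactors hp).odd_of_ne_two (by omega)
    have hpm : Even (p - m) := Nat.Odd.sub_odd hpo hmo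
    exact (Finset.dvd_prod_of_mem _ hp).even (hpm.mul_left _)
  · exact ⟨0, rfl⟩

lemma L_eq_zero_of_even {m a : ℕ} (hm : 1 < m) (ha : 1 < a) (h : Even a) : L m a = 0 := by
  have h2 : 2 ∈ a.primeFactors :=
    Nat.mem_primeFactors.mpr ⟨Nat.prime_two, h.two_dvd, by omega⟩
  unfold L
  rw [if_neg (by omega), if_neg fun hlarge => by have := hlarge 2 h2; omega]

lemma R_eq {m n k : ℕ} (hk : 0 < k) (hle : (L m)^[k] n ≤ 1)
    (hgt : ∀ j, 0 < j → j < k → 1 < (L m)^[j] n) : R m n = k := by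
  have hmem : k ∈ {k | 0 < k ∧ ((L m)^[k] n = 0 ∨ (L m)^[k] n = 1)} := ⟨hk, by omega⟩
  refine le_antisymm (Nat.sInf_le hmem) (le_csInf ⟨k, hmem⟩ fun j ⟨hj, hj01⟩ => ?_)
  by_contra! hjk
  have := hgt j hj hjk
  omega

lemma D_eq_L {m n : ℕ} (hm : 1 < m) (hmo : Odd m) (hn : 1 < n) : D m n = L m n := by
  rw [D, if_neg (by omega)]
  by_cases hL : L m n ≤ 1
  · rw [R_eq one_pos (by simpa using hL) (by omega)]
    simp
  · have hLL : (L m)^[2] n = 0 := by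
      rw [Function.iterate_succ_apply', Function.iterate_one]
      exact L_eq_zero_of_even hm (by omega) (even_L hm hmo hn)
    have hR : R m n = 2 := R_eq two_pos (by omega) fun j hj hj2 => by
      obtain rfl : j = 1 := by omega
      simpa using hL
    rw [hR, show Icc 1 2 = {1, 2} by rfl, sum_pair (by decide), hLL, Function.iterate_one,
      add_zero]

theorem Dm_deficient_of_odd (m : ℕ) (hm : 1 < m) (hmo : Odd m) :
    ∀ n : ℕ, 0 < n → D m n < n := by
  intro n hn
  obtain rfl | hn1 := (Nat.one_le_iff_ne_zero.mpr hn.ne').eq_or_lt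
  · simp [D]
  · rw [D_eq_L hm hmo hn1]
    exact L_lt_self (by omega) hn1
end

section
/- For every positive integer m, every positive even integer n satisfies D_m(n) < n. -/
open Finset

/-!
For `m ≥ 2` the prime `2` divides every even `n` and is not larger than `m`, so `L_m(n) = 0`
and `D_m(n) = 0`. For `m = 1`, `L_1 = φ`, and the orbit of `n` reaches `1`, so
`D_1(n) = φ(n) + D_1(φ(n))` whenever `φ(n) > 1`. For even `n` we have `2 φ(n) ≤ n`, and
`φ(n)` is again even, so strong induction gives `D_1(n) < φ(n) + φ(n) ≤ n`.
-/

open scoped Nat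

lemma sum_Icc_one_iterate_succ {M : Type*} [AddCommMonoid M] (f : M → M) (x : M) (k : ℕ) :
    ∑ i ∈ Icc 1 (k + 1), f^[i] x = f x + ∑ i ∈ Icc 1 k, f^[i] (f x) := by
  induction k with
  | zero => simp
  | succ k ih =>
    rw [sum_Icc_succ_top (by omega), ih, sum_Icc_succ_top (by omega), add_assoc,
      Function.iterate_succ_apply]

lemma Nat.two_mul_totient_le_of_even {n : ℕ} (hn : Even n) : 2 * φ n ≤ n := by
  induction n using Nat.strong_induction_on with
  | _ n ih =>
    obtain ⟨k, rfl⟩ := hn.two_dvd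
    rcases Nat.even_or_odd k with hk | hk
    · rcases k.eq_zero_or_pos with rfl | hk₀
      · simp
      have := ih k (by omega) hk
      rw [Nat.totient_two_mul_of_even hk]
      omega
    · have := Nat.totient_le k
      rw [Nat.totient_two_mul_of_odd hk]
      omega

lemma L_one_eq_totient (n : ℕ) : L 1 n = φ n := by
  unfold L
  rcases le_or_gt n 1 with h | h
  · interval_cases n <;> simp
  · rw [if_neg (by omega), if_pos fun p hp => (Nat.prime_of_mem_primeFactors hp).one_lt,
      Nat.totient_eq_prod_factorization (by omega), Finsupp.prod, Nat.support_factorization]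

lemma L_eq_zero_of_two_le_of_even {m n : ℕ} (hm : 2 ≤ m) (hn : 1 < n) (he : Even n) :
    L m n = 0 := by
  have h2 : 2 ∈ n.primeFactors :=
    Nat.mem_primeFactors.mpr ⟨Nat.prime_two, he.two_dvd, by omega⟩
  unfold L
  rw [if_neg (by omega), if_neg fun h => by have := h 2 h2; omega]

lemma R_eq_one_of_L_eq_zero_or_one {m n : ℕ} (h : L m n = 0 ∨ L m n = 1) : R m n = 1 := by
  have h1 : 1 ∈ {k | 0 < k ∧ ((L m)^[k] n = 0 ∨ (L m)^[k] n = 1)} := by simpa using h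
  exact le_antisymm (Nat.sInf_le h1) (le_csInf ⟨1, h1⟩ fun k hk => hk.1)

lemma R_eq_R_L_add_one {m n : ℕ} (hL : 1 < L m n)
    (hne : ∃ k, 0 < k ∧ ((L m)^[k] (L m n) = 0 ∨ (L m)^[k] (L m n) = 1)) :
    R m n = R m (L m n) + 1 := by
  have hmem : R m (L m n) + 1 ∈ {k | 0 < k ∧ ((L m)^[k] n = 0 ∨ (L m)^[k] n = 1)} :=
    ⟨Nat.succ_pos _, by rw [Function.iterate_succ_apply]; exact (Nat.sInf_mem hne).2⟩
  refine le_antisymm (Nat.sInf_le hmem) (le_csInf ⟨_, hmem⟩ ?_)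
  rintro (_ | _ | j) ⟨hk, hk'⟩
  · omega
  · rw [Function.iterate_succ_apply, Function.iterate_zero_apply] at hk'
    omega
  · rw [Function.iterate_succ_apply] at hk'
    have : R m (L m n) ≤ j + 1 := Nat.sInf_le ⟨j.succ_pos, hk'⟩
    omega

lemma D_eq_L_of_L_eq_zero_or_one {m n : ℕ} (hn : n ≠ 1) (h : L m n = 0 ∨ L m n = 1) :
    D m n = L m n := by
  simp [D, hn, R_eq_one_of_L_eq_zero_or_one h]

lemma D_eq_L_add_D_L {m n : ℕ} (hn : n ≠ 1) (hL : 1 < L m n)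
    (hne : ∃ k, 0 < k ∧ ((L m)^[k] (L m n) = 0 ∨ (L m)^[k] (L m n) = 1)) :
    D m n = L m n + D m (L m n) := by
  rw [D, D, if_neg hn, if_neg hL.ne', R_eq_R_L_add_one hL hne, sum_Icc_one_iterate_succ]

lemma exists_iterate_L_one_eq_zero_or_one (n : ℕ) :
    ∃ k, 0 < k ∧ ((L 1)^[k] n = 0 ∨ (L 1)^[k] n = 1) := by
  induction n using Nat.strong_induction_on with
  | _ n ih =>
    rcases le_or_gt n 1 with h | h
    · refine ⟨1, one_pos, ?_⟩
      interval_cases n <;> simp [L_one_eq_totient]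
    · obtain ⟨k, hk, hk'⟩ := ih (φ n) (Nat.totient_lt n h)
      refine ⟨k + 1, k.succ_pos, ?_⟩
      rwa [Function.iterate_succ_apply, L_one_eq_totient]

lemma D_one_lt_of_even {n : ℕ} (hn : 0 < n) (he : Even n) : D 1 n < n := by
  induction n using Nat.strong_induction_on with
  | _ n ih =>
    have hn₂ : n ≠ 1 := by rintro rfl; exact Nat.not_even_one he
    have htot : 2 * φ n ≤ n := Nat.two_mul_totient_le_of_even he
    rcases le_or_gt (φ n) 1 with h | h
    · rw [D_eq_L_of_L_eq_zero_or_one hn₂ (by rw [L_one_eq_totient]; omega),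
        L_one_eq_totient]
      omega
    · have hφ : Even (φ n) := Nat.totient_even (by omega)
      have := ih (φ n) (by omega) (by omega) hφ
      rw [D_eq_L_add_D_L hn₂ (by rwa [L_one_eq_totient])
        (exists_iterate_L_one_eq_zero_or_one _), L_one_eq_totient]
      omega

theorem Dm_deficient_of_even (m : ℕ) (hm : 0 < m) :
    ∀ n : ℕ, 0 < n → Even n → D m n < n := by
  intro n hn he
  obtain rfl | hm₂ : m = 1 ∨ 2 ≤ m := by omega
  · exact D_one_lt_of_even hn he
  · have hn₁ : 1 < n := by rcases he with ⟨k, rfl⟩; omega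
    have hL : L m n = 0 := L_eq_zero_of_two_le_of_even hm₂ hn₁ he
    rw [D_eq_L_of_L_eq_zero_or_one hn₁.ne' (.inl hL), hL]
    exact hn
end

section
/- If k > 1 is an odd integer, then at least one of k, L_2(k), L_2^{(2)}(k) is divisible by 3. -/
open Finset

lemma L_two_eq {n : ℕ} (hn : 1 < n) (ho : Odd n) :
    L 2 n = ∏ p ∈ n.primeFactors, p ^ (n.factorization p - 1) * (p - 2) := by
  rw [L, if_neg (by omega), if_pos]
  intro p hp
  have hpp := Nat.prime_of_mem_primeFactors hp
  have hpd := Nat.dvd_of_mem_primeFactors hp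
  have hp2 : p ≠ 2 := by
    rintro rfl
    have := Nat.odd_iff.mp ho
    omega
  have := hpp.two_le
  omega

lemma sub_two_dvd_L {n q : ℕ} (hn : 1 < n) (ho : Odd n) (hq : q ∈ n.primeFactors) :
    (q - 2) ∣ L 2 n := by
  rw [L_two_eq hn ho]
  exact (dvd_mul_left (q - 2) _).trans (Finset.dvd_prod_of_mem _ hq)

lemma L_odd {n : ℕ} (hn : 1 < n) (ho : Odd n) : Odd (L 2 n) := by
  rw [L_two_eq hn ho]
  refine Finset.prod_induction _ Odd (fun a b => Odd.mul) odd_one ?_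
  intro p hp
  have hpp := Nat.prime_of_mem_primeFactors hp
  have hpd := Nat.dvd_of_mem_primeFactors hp
  have hp2 : p ≠ 2 := by
    rintro rfl
    have := Nat.odd_iff.mp ho
    omega
  have hpo : Odd p := hpp.odd_of_ne_two hp2
  have hpo2 : Odd (p - 2) := by
    have := Nat.odd_iff.mp hpo
    have := hpp.two_le
    rw [Nat.odd_iff]
    omega
  exact (hpo.pow).mul hpo2

lemma exists_prime_two_mod_three : ∀ n : ℕ, n % 3 = 2 →
    ∃ q, q.Prime ∧ q ∣ n ∧ q % 3 = 2 := by
  intro n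
  induction n using Nat.strong_induction_on with
  | _ n ih =>
    intro hn
    obtain ⟨p, hp, hpd⟩ := Nat.exists_prime_and_dvd (by omega : n ≠ 1)
    have h3 : p % 3 = 0 ∨ p % 3 = 1 ∨ p % 3 = 2 := by omega
    rcases h3 with h0 | h1 | h2
    · exfalso
      have : (3 : ℕ) ∣ n := (Nat.dvd_of_mod_eq_zero h0).trans hpd
      omega
    · set m := n / p with hm
      have hnm : n = p * m := (Nat.mul_div_cancel' hpd).symm
      have hmm : n % 3 = (p % 3) * (m % 3) % 3 := by rw [hnm, Nat.mul_mod]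
      rw [h1, one_mul] at hmm
      have hm2 : m % 3 = 2 := by omega
      have hmlt : m < n := Nat.div_lt_self (by omega) hp.one_lt
      obtain ⟨q, hq, hqd, hq2⟩ := ih m hmlt hm2
      exact ⟨q, hq, hqd.trans ⟨p, by rw [hnm, Nat.mul_comm]⟩, hq2⟩
    · exact ⟨p, hp, hpd, h2⟩

theorem three_dvd_iterate (k : ℕ) (hk : 1 < k) (hko : Odd k) :
    3 ∣ k ∨ 3 ∣ L 2 k ∨ 3 ∣ (L 2) ((L 2) k) := by
  by_cases h3 : 3 ∣ k
  · exact Or.inl h3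
  right
  by_cases hA : ∃ p ∈ k.primeFactors, p % 3 = 2
  · obtain ⟨p, hp, hp2⟩ := hA
    left
    have hd := sub_two_dvd_L hk hko hp
    have hpp := Nat.prime_of_mem_primeFactors hp
    have h3p : 3 ∣ p - 2 := by have := hpp.two_le; omega
    exact h3p.trans hd
  · push_neg at hA
    obtain ⟨p, hp, hpd⟩ := Nat.exists_prime_and_dvd (by omega : k ≠ 1)
    have hpm : p ∈ k.primeFactors := Nat.mem_primeFactors.mpr ⟨hp, hpd, by omega⟩
    have hp1 : p % 3 = 1 := by
      have h0 : p % 3 ≠ 0 := fun h => h3 ((Nat.dvd_of_mod_eq_zero h).trans hpd)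
      have := hA p hpm
      omega
    have hpo : p ≠ 2 := by
      rintro rfl
      have := Nat.odd_iff.mp hko
      omega
    have hp2 : 2 < p := by have := hp.two_le; omega
    have hpm3 : (p - 2) % 3 = 2 := by omega
    obtain ⟨q, hq, hqd, hq2⟩ := exists_prime_two_mod_three (p - 2) hpm3
    have hqL : q ∣ L 2 k := hqd.trans (sub_two_dvd_L hk hko hpm)
    have hLodd : Odd (L 2 k) := L_odd hk hko
    have hLmod := Nat.odd_iff.mp hLodd
    have hL1 : 1 < L 2 k := by
      have hne : L 2 k ≠ 0 := by omega
      have := Nat.le_of_dvd (by omega) hqL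
      have := hq.two_le
      omega
    have hqm : q ∈ (L 2 k).primeFactors := Nat.mem_primeFactors.mpr ⟨hq, hqL, by omega⟩
    right
    have hd := sub_two_dvd_L hL1 hLodd hqm
    have h3q : 3 ∣ q - 2 := by have := hq.two_le; omega
    exact h3q.trans hd
end

section
/- For every positive even integer m, there exist infinitely many primes p₀ such that for all positive integers α, L_m(p₀^α) + L_m^{(2)}(p₀^α) > p₀^α. -/
open Finset

/-!
Choose a prime `q₀ > m² + m`. By Dirichlet's theorem and the Chinese remainder theorem there are
infinitely many primes `p` such that `k = p - m` is divisible by `q₀` and has no prime factor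
`≤ m`. Then `k > m²` and `L_m(k) ≥ q₀ - m > m`. Since `L_m` is multiplicative and `p ∤ k`,
`L_m(p) + L_m(L_m(p)) = k + L_m(k) > p`, and for `α ≥ 2`
`L_m(p^α) + L_m(L_m(p^α)) = p^(α-2) k (p + L_m(k))`, which exceeds `p^α` because
`k L_m(k) ≥ k (m + 1) > k m + m² = p m`.
-/

open Filter

-- A prime factor `p ≤ m` contributes the factor `p - m = 0`, so the side condition in `L` is
-- automatic once `n ≠ 0`.
lemma L_eq_factorization_prod {m n : ℕ} (hn : n ≠ 0) :
    L m n = n.factorization.prod fun p e => p ^ (e - 1) * (p - m) := by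
  rw [L, Finsupp.prod, Nat.support_factorization]
  split_ifs with h1 h2
  · obtain rfl : n = 1 := by omega
    simp
  · rfl
  · push Not at h2
    obtain ⟨p, hp, hpm⟩ := h2
    exact (Finset.prod_eq_zero hp (by simp [Nat.sub_eq_zero_of_le hpm])).symm

lemma L_mul_of_coprime {m a b : ℕ} (hab : a.Coprime b) : L m (a * b) = L m a * L m b := by
  rcases eq_or_ne a 0 with rfl | ha
  · simp [(Nat.coprime_zero_left b).1 hab, L]
  rcases eq_or_ne b 0 with rfl | hb
  · simp [(Nat.coprime_zero_right a).1 hab, L]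
  rw [L_eq_factorization_prod (mul_ne_zero ha hb), L_eq_factorization_prod ha,
    L_eq_factorization_prod hb, Nat.factorization_mul_of_coprime hab,
    Finsupp.prod_add_index_of_disjoint]
  simpa only [Nat.support_factorization] using hab.disjoint_primeFactors

lemma L_prime_pow {m p α : ℕ} (hp : p.Prime) (hα : α ≠ 0) :
    L m (p ^ α) = p ^ (α - 1) * (p - m) := by
  rw [L_eq_factorization_prod (pow_ne_zero _ hp.ne_zero), hp.factorization_pow,
    Finsupp.prod, Finsupp.support_single _ hα, Finset.prod_singleton,
    Finsupp.single_eq_same]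

lemma sub_le_L_of_mem_primeFactors {m k q : ℕ} (hq : q ∈ k.primeFactors)
    (hk : ∀ r ∈ k.primeFactors, m < r) : q - m ≤ L m k := by
  rw [L_eq_factorization_prod (Nat.mem_primeFactors.1 hq).2.2, Finsupp.prod,
    Nat.support_factorization]
  have hpos : ∀ r ∈ k.primeFactors, 0 < r ^ (k.factorization r - 1) * (r - m) := fun r hr =>
    Nat.mul_pos (pow_pos (Nat.pos_of_mem_primeFactors hr) _) (Nat.sub_pos_of_lt (hk r hr))
  calc q - m ≤ q ^ (k.factorization q - 1) * (q - m) :=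
        Nat.le_mul_of_pos_left _ (pow_pos (Nat.pos_of_mem_primeFactors hq) _)
    _ ≤ _ := Finset.single_le_prod' (f := fun r => r ^ (k.factorization r - 1) * (r - m))
        hpos hq

theorem lt_L_add_L_L_prime_pow {m p α : ℕ} (hm : 0 < m) (hp : p.Prime) (hk : m * m < p - m)
    (hL : m < L m (p - m)) (hα : α ≠ 0) :
    p ^ α < L m (p ^ α) + L m (L m (p ^ α)) := by
  rw [L_prime_pow hp hα]
  generalize hk_def : p - m = k at hk hL
  have hpk : p = k + m := by omega
  obtain ⟨β, rfl | rfl⟩ : ∃ β, α = 1 ∨ α = β + 2 := ⟨α - 2, by omega⟩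
  · simp only [pow_one, Nat.sub_self, pow_zero, one_mul]
    omega
  have hcop : (p ^ (β + 1)).Coprime k :=
    .pow_left _ (hp.coprime_iff_not_dvd.2 (Nat.not_dvd_of_pos_of_lt (by omega) (by omega)))
  rw [show β + 2 - 1 = β + 1 by omega, L_mul_of_coprime hcop, L_prime_pow hp (by omega),
    Nat.add_sub_cancel, hk_def]
  have hsq : p * p < p * k + k * L m k := by subst hpk; nlinarith
  calc p ^ (β + 2) = p ^ β * (p * p) := by ring
    _ < p ^ β * (p * k + k * L m k) := Nat.mul_lt_mul_of_pos_left hsq (pow_pos hp.pos _)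
    _ = p ^ (β + 1) * k + p ^ β * k * L m k := by ring

lemma Nat.frequently_atTop_prime_and_forall_modEq {t : Finset ℕ} (ht : ∀ q ∈ t, q.Prime)
    {a : ℕ → ℕ} (ha : ∀ q ∈ t, ¬ q ∣ a q) :
    ∃ᶠ p in atTop, p.Prime ∧ ∀ q ∈ t, p ≡ a q [MOD q] := by
  have hpair : Set.Pairwise t Nat.Coprime := fun q hq r hr hqr =>
    (Nat.coprime_primes (ht q hq) (ht r hr)).2 hqr
  obtain ⟨c, hc⟩ := Nat.chineseRemainderOfFinset a id t (fun q hq => (ht q hq).ne_zero) hpair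
  have hcop : c.Coprime (∏ q ∈ t, q) := Nat.Coprime.prod_right fun q hq =>
    ((ht q hq).coprime_iff_not_dvd.2 fun hdvd => ha q hq (((hc q hq).dvd_iff dvd_rfl).1 hdvd)).symm
  refine (Nat.frequently_atTop_prime_and_modEq
    (Finset.prod_ne_zero_iff.2 fun q hq => (ht q hq).ne_zero) hcop).mono ?_
  rintro p ⟨hp, hpc⟩
  exact ⟨hp, fun q hq => (hpc.of_dvd (Finset.dvd_prod_of_mem _ hq)).trans (hc q hq)⟩

lemma Nat.exists_not_dvd_and_not_modEq {q : ℕ} (hq : 2 < q) (m : ℕ) :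
    ∃ a, ¬ q ∣ a ∧ ¬ m ≡ a [MOD q] := by
  by_cases h : m % q = 1
  · refine ⟨2, Nat.not_dvd_of_pos_of_lt two_pos hq, ?_⟩
    rw [Nat.ModEq, h, Nat.mod_eq_of_lt hq]
    omega
  · refine ⟨1, Nat.not_dvd_of_pos_of_lt one_pos (by omega), ?_⟩
    rwa [Nat.ModEq, Nat.mod_eq_of_lt (by omega : 1 < q)]

-- Take `p ≡ m (mod q₀)` and `p ≢ 0, m (mod q)` for every odd prime `q ≤ m`; the prime `2` is
-- excluded by parity, as `p` is odd and `m` even.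
lemma frequently_atTop_prime_and_primeFactors_sub {m q₀ : ℕ} (hm : 0 < m) (hme : Even m)
    (hq₀ : q₀.Prime) (hmq₀ : m < q₀) :
    ∃ᶠ p in atTop, p.Prime ∧ q₀ ∈ (p - m).primeFactors ∧ ∀ q ∈ (p - m).primeFactors, m < q := by
  set S := {q ∈ Finset.range (m + 1) | q.Prime ∧ q ≠ 2}
  have hS : ∀ q ∈ S, ∃ a, ¬ q ∣ a ∧ ¬ m ≡ a [MOD q] := fun q hq => by
    simp only [S, Finset.mem_filter] at hq
    exact Nat.exists_not_dvd_and_not_modEq (lt_of_le_of_ne hq.2.1.two_le hq.2.2.symm) m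
  choose! a ha using hS
  have hq₀S : q₀ ∉ S := fun h => by
    simp only [S, Finset.mem_filter, Finset.mem_range] at h
    omega
  have hprime : ∀ q ∈ insert q₀ S, q.Prime := by
    simp only [Finset.mem_insert, S, Finset.mem_filter]
    rintro q (rfl | hq)
    exacts [hq₀, hq.2.1]
  have hndvd : ∀ q ∈ insert q₀ S, ¬ q ∣ Function.update a q₀ m q := by
    simp only [Finset.mem_insert]
    rintro q (rfl | hq) hdvd
    · exact absurd (Nat.le_of_dvd hm (by simpa using hdvd)) (by omega)
    · rw [Function.update_of_ne (ne_of_mem_of_not_mem hq hq₀S)] at hdvd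
      exact (ha q hq).1 hdvd
  refine ((Nat.frequently_atTop_prime_and_forall_modEq hprime hndvd).and_eventually
    (eventually_gt_atTop m)).mono ?_
  rintro p ⟨⟨hp, hpa⟩, hmp⟩
  have hdvd_iff {q : ℕ} : q ∣ p - m ↔ m ≡ p [MOD q] := (Nat.modEq_iff_dvd' hmp.le).symm
  have hq₀k : q₀ ∣ p - m := hdvd_iff.2 (by simpa using (hpa q₀ (Finset.mem_insert_self _ _)).symm)
  refine ⟨hp, Nat.mem_primeFactors.2 ⟨hq₀, hq₀k, by omega⟩, fun q hq => ?_⟩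
  by_contra! hqm
  have hqk := Nat.dvd_of_mem_primeFactors hq
  have hq2 : q ≠ 2 := by
    rintro rfl
    exact (Nat.Odd.sub_even hmp.le (hp.odd_of_ne_two (by omega)) hme).not_two_dvd_nat hqk
  have hqS : q ∈ S := by
    simp only [S, Finset.mem_filter, Finset.mem_range]
    exact ⟨by omega, Nat.prime_of_mem_primeFactors hq, hq2⟩
  have hpq := hpa q (Finset.mem_insert_of_mem hqS)
  rw [Function.update_of_ne (by omega)] at hpq
  exact (ha q hqS).2 ((hdvd_iff.1 hqk).trans hpq)

theorem infinitely_many_abundant_prime_powers (m : ℕ) (hm : 0 < m)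
    (hme : Even m) :
    {p : ℕ | p.Prime ∧ ∀ α : ℕ, 0 < α →
      p ^ α < L m (p ^ α) + (L m) ((L m) (p ^ α))}.Infinite := by
  obtain ⟨q₀, hq₀m, hq₀⟩ := Nat.exists_infinite_primes (m * m + m + 1)
  refine Nat.frequently_atTop_iff_infinite.1
    ((frequently_atTop_prime_and_primeFactors_sub hm hme hq₀ (by omega)).mono ?_)
  rintro p ⟨hp, hq₀k, hk⟩
  have hq₀_le := Nat.le_of_mem_primeFactors hq₀k
  have hL := sub_le_L_of_mem_primeFactors hq₀k hk
  have hm_sq := Nat.le_mul_self m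
  exact ⟨hp, fun α hα => lt_L_add_L_L_prime_pow hm hp (by omega) (by omega) hα.ne'⟩
end
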